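/- arXiv:1511.02036 — 3 statements merged into one kernel-verified Lean document; each statement's English description precedes it below -/
import Mathlib

section
/- Let 1 < p ≤ ∞, m ∈ ℕ_0 and k ∈ ℕ with k > mp/(p−1) + 1 (interpreted as k > m + 1 when p = ∞). Let φ ∈ C_0^k(ℝ) satisfy supp(φ) ⊆ [0,1], φ(t) > 0 on (0,1), and suppose φ^{(k)} has only finitely many zeros in [0,1]. Then for every n with 0 ≤ n ≤ m there exists a constant C > 0 such that |φ^{(n)}(t)| ≤ C |φ(t)|^{1/p} for all t ∈ [0,1] (with |φ(t)|^{1/p} interpreted as 1 when p = ∞). -/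
/-!
On some `(0, δ)` the `k`-th derivative has no zeros, hence a constant sign, which must be positive
because `φ > 0` there. Since all lower derivatives vanish at `0`, they are then positive and
increasing on `(0, δ)`, and two mean value steps give `φ⁽ⁱ⁺¹⁾(t) ≤ φ⁽ⁱ⁾(t) / h + h φ⁽ⁱ⁺²⁾(t)` for
every `h > 0` (with `sup |φ⁽ᵏ⁾|` in place of `φ⁽ᵏ⁾(t)`). Optimising in `h` makes the sequence
`i ↦ φ⁽ⁱ⁾(t)` log-convex up to a factor `4`, so `φ⁽ⁿ⁾(t) ≲ φ(t) ^ ((k - n) / k)`, and the condition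
on `k` gives `1 / p ≤ (k - n) / k`. The endpoint `1` follows by reflecting `φ`, and away from
the endpoints `φ` is bounded below.
-/

open Real Set Filter Topology Asymptotics
open scoped ENNReal

theorem IsPreconnected.forall_pos_or_forall_neg {α : Type*} [TopologicalSpace α] {s : Set α}
    {g : α → ℝ} (hs : IsPreconnected s) (hg : ContinuousOn g s) (hne : ∀ x ∈ s, g x ≠ 0) :
    (∀ x ∈ s, 0 < g x) ∨ ∀ x ∈ s, g x < 0 := by
  by_contra! ⟨⟨a, ha, hga⟩, b, hb, hgb⟩
  obtain ⟨c, hc, hgc⟩ := hs.intermediate_value ha hb hg ⟨hga, hgb⟩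
  exact hne c hc hgc

theorem IsCompact.isBigO_principal_of_forall_nhdsWithin {α E F : Type*} [TopologicalSpace α]
    [Norm E] [SeminormedAddCommGroup F] {s : Set α} {f : α → E} {g : α → F} (hs : IsCompact s)
    (h : ∀ x ∈ s, f =O[𝓝[s] x] g) : f =O[𝓟 s] g := by
  refine hs.induction_on (p := fun t => f =O[𝓟 t] g) (by simp [isBigO_bot])
    (fun t u htu hu => hu.mono (principal_mono.2 htu))
    (fun t u ht hu => by simpa only [sup_principal] using ht.sup hu) fun x hx => ?_
  obtain ⟨c, hc⟩ := (h x hx).bound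
  exact ⟨_, hc, isBigO_principal.2 ⟨c, fun y hy => hy⟩⟩

theorem isBigO_rpow_abs_of_ne_zero {α : Type*} [TopologicalSpace α] {g f : α → ℝ} {x : α}
    {e : ℝ} (hg : ContinuousAt g x) (hf : ContinuousAt f x) (hfx : f x ≠ 0) :
    g =O[𝓝 x] fun t => |f t| ^ e := by
  have hF : ContinuousAt (fun t => |f t| ^ e) x :=
    hf.abs.rpow_const (Or.inl (abs_pos.2 hfx).ne')
  have hFx : |f x| ^ e ≠ 0 := (rpow_pos_of_pos (abs_pos.2 hfx) e).ne'
  exact isBigO_of_div_tendsto_nhds ((hF.eventually_ne hFx).mono fun t ht h => absurd h ht) _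
    (hg.div hF hFx)

theorem sq_le_four_mul_of_forall_le_div_add_mul {x y z : ℝ} (hx : 0 < x) (hz : 0 < z)
    (hy : 0 ≤ y) (h : ∀ r > 0, y ≤ x / r + r * z) : y ^ 2 ≤ 4 * x * z := by
  obtain ⟨a, ha, rfl⟩ : ∃ a > 0, a ^ 2 = x := ⟨√x, sqrt_pos.2 hx, sq_sqrt hx.le⟩
  obtain ⟨b, hb, rfl⟩ : ∃ b > 0, b ^ 2 = z := ⟨√z, sqrt_pos.2 hz, sq_sqrt hz.le⟩
  have hab : a ^ 2 / (a / b) + a / b * b ^ 2 = 2 * (a * b) := by field_simp; ring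
  have := h (a / b) (div_pos ha hb)
  nlinarith

theorem mul_le_of_two_mul_le_add {c : ℕ → ℝ} {k n : ℕ}
    (hc : ∀ i, i + 2 ≤ k → 2 * c (i + 1) ≤ c i + c (i + 2)) (hn : n ≤ k) :
    k * c n ≤ (k - n) * c 0 + n * c k := by
  set d : ℕ → ℝ := fun i => c (i + 1) - c i
  have hd : ∀ i j, i ≤ j → j < k → d i ≤ d j := by
    intro i j hij hjk
    induction j, hij using Nat.le_induction with
    | base => rfl
    | succ j _ ih => exact (ih (by omega)).trans (by linarith [hc j (by omega)])
  have hleft : ∑ i ∈ Finset.range n, d i = c n - c 0 := Finset.sum_range_sub c n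
  have hright : ∑ j ∈ Finset.Ico n k, d j = c k - c n := by
    rw [Finset.sum_Ico_eq_sub d hn, Finset.sum_range_sub, Finset.sum_range_sub]; ring
  have key : (k - n : ℝ) * ∑ i ∈ Finset.range n, d i ≤ n * ∑ j ∈ Finset.Ico n k, d j := by
    calc (k - n : ℝ) * ∑ i ∈ Finset.range n, d i
        = ∑ i ∈ Finset.range n, ∑ _j ∈ Finset.Ico n k, d i := by
          simp [Finset.mul_sum, Nat.cast_sub hn]
      _ ≤ ∑ _i ∈ Finset.range n, ∑ j ∈ Finset.Ico n k, d j := by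
          gcongr with i hi j hj
          rw [Finset.mem_range] at hi
          rw [Finset.mem_Ico] at hj
          exact hd i j (by omega) (by omega)
      _ = n * ∑ j ∈ Finset.Ico n k, d j := by simp
  rw [hleft, hright] at key
  linear_combination key

theorem le_two_pow_mul_rpow_mul_rpow {a : ℕ → ℝ} {k n : ℕ} (hpos : ∀ i ≤ k, 0 < a i)
    (hstep : ∀ i, i + 2 ≤ k → ∀ h > 0, a (i + 1) ≤ a i / h + h * a (i + 2)) (hn : n < k) :
    a n ≤ 2 ^ (n * k) * a 0 ^ ((k - n : ℝ) / k) * a k ^ ((n : ℝ) / k) := by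
  have hk : (0 : ℝ) < k := by exact_mod_cast n.zero_le.trans_lt hn
  -- the weight `i² log 2` absorbs the factor `4` in `aᵢ₊₁² ≤ 4 aᵢ aᵢ₊₂`
  set c : ℕ → ℝ := fun i => log (a i) + i ^ 2 * log 2
  have hc : ∀ i, i + 2 ≤ k → 2 * c (i + 1) ≤ c i + c (i + 2) := by
    intro i hi
    have hai := hpos i (by omega)
    have hai₁ := hpos (i + 1) (by omega)
    have hai₂ := hpos (i + 2) hi
    have hlog := log_le_log (by positivity)
      (sq_le_four_mul_of_forall_le_div_add_mul hai hai₂ hai₁.le (hstep i hi))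
    rw [log_pow, log_mul (by positivity) hai₂.ne', log_mul (by norm_num) hai.ne',
      show (4 : ℝ) = 2 ^ 2 by norm_num, log_pow] at hlog
    simp only [c]
    push_cast
    linear_combination hlog
  have hconv := mul_le_of_two_mul_le_add hc hn.le
  simp only [c] at hconv
  push_cast at hconv
  have ha0 := hpos 0 (by omega)
  have hak := hpos k le_rfl
  rw [← log_le_log_iff (hpos n hn.le) (by positivity), log_mul (by positivity) (by positivity),
    log_mul (by positivity) (by positivity), log_pow, log_rpow ha0, log_rpow hak,
    ← mul_le_mul_iff_right₀ hk]
  have hlog2 : 0 ≤ log 2 := log_nonneg one_le_two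
  have hexpand : (k : ℝ) * (↑(n * k) * log 2 + (k - n) / k * log (a 0) + n / k * log (a k)) =
      n * k ^ 2 * log 2 + (k - n) * log (a 0) + n * log (a k) := by
    field_simp
    push_cast
    ring
  rw [hexpand]
  linarith [mul_nonneg (mul_nonneg hk.le (sq_nonneg (n : ℝ))) hlog2]

theorem le_div_add_mul_of_hasDerivAt {g g' g'' : ℝ → ℝ} {t h B : ℝ}
    (hg : ∀ x, HasDerivAt g (g' x) x) (hg' : ∀ x, HasDerivAt g' (g'' x) x) (hh : 0 < h)
    (hB : 0 ≤ B) (hg0 : 0 ≤ g (t - h)) (hg''B : ∀ s ∈ Ioo (t - h) t, g'' s ≤ B) :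
    g' t ≤ g t / h + h * B := by
  obtain ⟨c, hc, hgc⟩ := exists_hasDerivAt_eq_slope g g' (sub_lt_self t hh)
    (fun x _ => (hg x).continuousAt.continuousWithinAt) fun x _ => hg x
  obtain ⟨c', hc', hgc'⟩ := exists_hasDerivAt_eq_slope g' g'' hc.2
    (fun x _ => (hg' x).continuousAt.continuousWithinAt) fun x _ => hg' x
  rw [sub_sub_cancel] at hgc
  rw [eq_div_iff (sub_pos.2 hc.2).ne'] at hgc'
  have hc'B := hg''B c' ⟨hc.1.trans hc'.1, hc'.2⟩
  have hleft : g' c ≤ g t / h := by rw [hgc]; gcongr; linarith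
  have hright : g' t - g' c ≤ h * B := by
    rw [← hgc', mul_comm h]
    calc g'' c' * (t - c) ≤ B * (t - c) := by gcongr; linarith [hc.2]
      _ ≤ B * h := by gcongr; linarith [hc.1]
  linarith

section IteratedDeriv

variable {𝕜 F : Type*} [NontriviallyNormedField 𝕜] [NormedAddCommGroup F] [NormedSpace 𝕜 F]

theorem iteratedDeriv_eq_zero_of_notMem_interior {f : 𝕜 → F} {s : Set 𝕜} {j : ℕ} {x : 𝕜}
    (hcont : Continuous (iteratedDeriv j f)) (hs : tsupport f ⊆ s) (hx : x ∉ interior s) :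
    iteratedDeriv j f x = 0 := by
  have hzero : sᶜ ⊆ {y | iteratedDeriv j f y = 0} := fun y hy => by
    have : f =ᶠ[𝓝 y] 0 := notMem_tsupport_iff_eventuallyEq.1 fun h => hy (hs h)
    simp [this.iteratedDeriv_eq j]
  refine closure_minimal hzero (isClosed_eq hcont continuous_const) ?_
  rwa [closure_compl]

theorem hasDerivAt_iteratedDeriv {f : 𝕜 → F} {k j : ℕ} (hf : ContDiff 𝕜 k f) (hj : j < k)
    (x : 𝕜) : HasDerivAt (iteratedDeriv j f) (iteratedDeriv (j + 1) f x) x := by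
  rw [iteratedDeriv_succ]
  exact (hf.differentiable_iteratedDeriv j (by exact_mod_cast hj) x).hasDerivAt

end IteratedDeriv

section Boundary

variable {f : ℝ → ℝ} {k n : ℕ} {δ : ℝ}

theorem iteratedDeriv_eq_zero_of_nonpos (hf : ContDiff ℝ k f) (hsupp : tsupport f ⊆ Ici 0)
    {j : ℕ} (hj : j ≤ k) {s : ℝ} (hs : s ≤ 0) : iteratedDeriv j f s = 0 :=
  iteratedDeriv_eq_zero_of_notMem_interior (hf.continuous_iteratedDeriv j (by exact_mod_cast hj))
    hsupp (by simpa using hs)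

theorem iteratedDeriv_pos_of_iteratedDeriv_pos (hf : ContDiff ℝ k f) (hsupp : tsupport f ⊆ Ici 0)
    (hk : ∀ t ∈ Ioo 0 δ, 0 < iteratedDeriv k f t) {j : ℕ} (hj : j ≤ k) :
    ∀ t ∈ Ioo 0 δ, 0 < iteratedDeriv j f t := by
  induction hj using Nat.decreasingInduction with
  | self => exact hk
  | of_succ j hjk ih =>
    have hmono : StrictMonoOn (iteratedDeriv j f) (Ico 0 δ) :=
      strictMonoOn_of_deriv_pos (convex_Ico 0 δ)
        (hf.continuous_iteratedDeriv j (by exact_mod_cast hjk.le)).continuousOn fun t ht => by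
          rw [interior_Ico] at ht
          rw [(hasDerivAt_iteratedDeriv hf hjk t).deriv]
          exact ih t ht
    intro t ht
    simpa [iteratedDeriv_eq_zero_of_nonpos hf hsupp hjk.le le_rfl] using
      hmono (left_mem_Ico.2 (ht.1.trans ht.2)) (Ioo_subset_Ico_self ht) ht.1

theorem iteratedDeriv_nonneg_of_iteratedDeriv_pos (hf : ContDiff ℝ k f)
    (hsupp : tsupport f ⊆ Ici 0) (hk : ∀ t ∈ Ioo 0 δ, 0 < iteratedDeriv k f t) {j : ℕ}
    (hj : j ≤ k) {s : ℝ} (hs : s < δ) : 0 ≤ iteratedDeriv j f s := by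
  rcases le_or_gt s 0 with h | h
  · exact (iteratedDeriv_eq_zero_of_nonpos hf hsupp hj h).ge
  · exact (iteratedDeriv_pos_of_iteratedDeriv_pos hf hsupp hk hj s ⟨h, hs⟩).le

theorem monotoneOn_iteratedDeriv_of_iteratedDeriv_pos (hf : ContDiff ℝ k f)
    (hsupp : tsupport f ⊆ Ici 0) (hk : ∀ t ∈ Ioo 0 δ, 0 < iteratedDeriv k f t) {j : ℕ}
    (hj : j < k) : MonotoneOn (iteratedDeriv j f) (Iio δ) :=
  monotoneOn_of_deriv_nonneg (convex_Iio δ)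
    (hf.continuous_iteratedDeriv j (by exact_mod_cast hj.le)).continuousOn
    (fun x _ => (hasDerivAt_iteratedDeriv hf hj x).differentiableAt.differentiableWithinAt)
    fun x hx => by
      rw [interior_Iio] at hx
      rw [(hasDerivAt_iteratedDeriv hf hj x).deriv]
      exact iteratedDeriv_nonneg_of_iteratedDeriv_pos hf hsupp hk hj hx

theorem iteratedDeriv_pos_of_pos_of_ne_zero (hf : ContDiff ℝ k f) (hsupp : tsupport f ⊆ Ici 0)
    (hδ : 0 < δ) (hfpos : ∀ t ∈ Ioo 0 δ, 0 < f t) (hk : ∀ t ∈ Ioo 0 δ, iteratedDeriv k f t ≠ 0) :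
    ∀ t ∈ Ioo 0 δ, 0 < iteratedDeriv k f t := by
  refine (isPreconnected_Ioo.forall_pos_or_forall_neg
    (hf.continuous_iteratedDeriv k le_rfl).continuousOn hk).resolve_right fun hneg => ?_
  have hmid : δ / 2 ∈ Ioo 0 δ := ⟨half_pos hδ, half_lt_self hδ⟩
  have := iteratedDeriv_pos_of_iteratedDeriv_pos hf.neg (tsupport_neg f ▸ hsupp)
    (by simpa [iteratedDeriv_neg] using hneg) k.zero_le _ hmid
  simp only [iteratedDeriv_zero, neg_pos] at this
  exact (hfpos _ hmid).not_gt this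

theorem exists_abs_iteratedDeriv_le_rpow (hf : ContDiff ℝ k f) (hsupp : tsupport f ⊆ Ici 0)
    (hk : ∀ t ∈ Ioo 0 δ, 0 < iteratedDeriv k f t) (hn : n < k) :
    ∃ C > 0, ∀ t ∈ Ioo 0 δ, |iteratedDeriv n f t| ≤ C * f t ^ ((k - n : ℝ) / k) := by
  have hpos : ∀ j ≤ k, ∀ t ∈ Ioo 0 δ, 0 < iteratedDeriv j f t := fun j hj =>
    iteratedDeriv_pos_of_iteratedDeriv_pos hf hsupp hk hj
  obtain ⟨M, hM, hMk⟩ : ∃ M > 0, ∀ s < δ, iteratedDeriv k f s ≤ M := by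
    obtain ⟨C, hC⟩ := (isCompact_Icc (a := 0) (b := δ)).exists_bound_of_continuousOn
      (hf.continuous_iteratedDeriv k le_rfl).continuousOn
    refine ⟨max C 1, by positivity, fun s hs => ?_⟩
    rcases le_or_gt s 0 with h | h
    · rw [iteratedDeriv_eq_zero_of_nonpos hf hsupp le_rfl h]; positivity
    · exact (le_abs_self _).trans ((hC s ⟨h.le, hs.le⟩).trans (le_max_left _ _))
  refine ⟨2 ^ (n * k) * M ^ ((n : ℝ) / k), by positivity, fun t ht => ?_⟩
  -- `f⁽ᵏ⁾` need not be monotone, so the last entry is its bound `M` rather than its value at `t`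
  set a : ℕ → ℝ := fun i => if i < k then iteratedDeriv i f t else M
  have ha : ∀ i < k, a i = iteratedDeriv i f t := fun i hi => if_pos hi
  have hak : a k = M := if_neg (lt_irrefl k)
  have hapos : ∀ i ≤ k, 0 < a i := fun i hi => by
    rcases hi.lt_or_eq with hi | rfl
    · rw [ha i hi]; exact hpos i hi.le t ht
    · rwa [hak]
  have hstep : ∀ i, i + 2 ≤ k → ∀ h > 0, a (i + 1) ≤ a i / h + h * a (i + 2) := by
    intro i hi h hh
    rw [ha i (by omega), ha (i + 1) (by omega)]
    refine le_div_add_mul_of_hasDerivAt (hasDerivAt_iteratedDeriv hf (by omega))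
      (hasDerivAt_iteratedDeriv hf (by omega)) hh (hapos _ hi).le
      (iteratedDeriv_nonneg_of_iteratedDeriv_pos hf hsupp hk (by omega) (by linarith [ht.2]))
      fun s hs => ?_
    rcases hi.lt_or_eq with hi | hi
    · rw [ha _ hi]
      exact monotoneOn_iteratedDeriv_of_iteratedDeriv_pos hf hsupp hk hi (hs.2.trans ht.2) ht.2
        hs.2.le
    · rw [hi, hak]; exact hMk s (hs.2.trans ht.2)
  have := le_two_pow_mul_rpow_mul_rpow hapos hstep hn
  rw [ha n hn, ha 0 (by omega), hak, iteratedDeriv_zero] at this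
  rw [abs_of_pos (hpos n hn.le t ht)]
  exact this.trans_eq (by ring)

theorem isBigO_iteratedDeriv_rpow_nhdsGE_zero {e : ℝ} (hf : ContDiff ℝ k f)
    (hsupp : tsupport f ⊆ Ici 0) (hfpos : ∀ᶠ t in 𝓝[>] 0, 0 < f t)
    (hk : ∀ᶠ t in 𝓝[>] 0, iteratedDeriv k f t ≠ 0) (hn : n < k) (he : e ≤ (k - n : ℝ) / k) :
    iteratedDeriv n f =O[𝓝[≥] 0] fun t => |f t| ^ e := by
  obtain ⟨δ, hδ, hδsub⟩ := mem_nhdsGT_iff_exists_Ioo_subset.1 (hfpos.and hk)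
  have hzero : ∀ j ≤ k, iteratedDeriv j f 0 = 0 := fun j hj =>
    iteratedDeriv_eq_zero_of_nonpos hf hsupp hj le_rfl
  have hkpos := iteratedDeriv_pos_of_pos_of_ne_zero hf hsupp hδ (fun t ht => (hδsub ht).1)
    fun t ht => (hδsub ht).2
  obtain ⟨C, hC, hbound⟩ := exists_abs_iteratedDeriv_le_rpow hf hsupp hkpos hn
  have hsmall : ∀ᶠ t in 𝓝 0, |f t| < 1 :=
    hf.continuous.abs.continuousAt.eventually_lt continuousAt_const
      (by simp [show f 0 = 0 by simpa using hzero 0 k.zero_le])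
  refine IsBigO.of_bound C ?_
  filter_upwards [Ico_mem_nhdsGE hδ, nhdsWithin_le_nhds hsmall] with t ht hft
  rw [norm_eq_abs, norm_of_nonneg (by positivity)]
  rcases ht.1.eq_or_lt with rfl | h0
  · rw [hzero n hn.le, abs_zero]; positivity
  · have hft0 := (hδsub ⟨h0, ht.2⟩).1
    rw [abs_of_pos hft0] at hft ⊢
    calc |iteratedDeriv n f t| ≤ C * f t ^ ((k - n : ℝ) / k) := hbound t ⟨h0, ht.2⟩
      _ ≤ C * f t ^ e :=
        mul_le_mul_of_nonneg_left (rpow_le_rpow_of_exponent_ge hft0 hft.le he) hC.le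

theorem isBigO_iteratedDeriv_rpow_nhdsWithin_Icc_zero {e : ℝ} (hf : ContDiff ℝ k f)
    (hsupp : tsupport f ⊆ Icc 0 1) (hfpos : ∀ t ∈ Ioo 0 1, 0 < f t)
    (hzeros : {t ∈ Icc (0 : ℝ) 1 | iteratedDeriv k f t = 0}.Finite) (hn : n < k)
    (he : e ≤ (k - n : ℝ) / k) :
    iteratedDeriv n f =O[𝓝[Icc 0 1] 0] fun t => |f t| ^ e := by
  have hfpos' : ∀ᶠ t in 𝓝[>] 0, 0 < f t := by
    filter_upwards [Ioo_mem_nhdsGT one_pos] using hfpos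
  have hk : ∀ᶠ t in 𝓝[>] 0, iteratedDeriv k f t ≠ 0 := by
    have hclosed := (hzeros.sdiff (t := {0})).isClosed
    filter_upwards [nhdsWithin_le_nhds (hclosed.compl_mem_nhds (by simp)),
      Ioo_mem_nhdsGT one_pos] with t hzero ht hkt
    exact hzero ⟨⟨⟨ht.1.le, ht.2.le⟩, hkt⟩, ht.1.ne'⟩
  exact (isBigO_iteratedDeriv_rpow_nhdsGE_zero hf (hsupp.trans Icc_subset_Ici_self) hfpos' hk hn
    he).mono (nhdsWithin_mono _ Icc_subset_Ici_self)

theorem isBigO_iteratedDeriv_rpow_nhdsWithin_Icc_one {e : ℝ} (hf : ContDiff ℝ k f)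
    (hsupp : tsupport f ⊆ Icc 0 1) (hfpos : ∀ t ∈ Ioo 0 1, 0 < f t)
    (hzeros : {t ∈ Icc (0 : ℝ) 1 | iteratedDeriv k f t = 0}.Finite) (hn : n < k)
    (he : e ≤ (k - n : ℝ) / k) :
    iteratedDeriv n f =O[𝓝[Icc 0 1] 1] fun t => |f t| ^ e := by
  set ψ : ℝ → ℝ := fun t => f (1 - t)
  have hψ : ContDiff ℝ k ψ := hf.comp (contDiff_const.sub contDiff_id)
  have hderiv : ∀ j t, iteratedDeriv j ψ t = (-1) ^ j * iteratedDeriv j f (1 - t) := fun j t => by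
    simp [ψ, iteratedDeriv_comp_const_sub]
  have hψsupp : tsupport ψ ⊆ Icc 0 1 :=
    (tsupport_comp_subset_preimage f (continuous_sub_left 1)).trans fun t ht => by
      have : 1 - t ∈ Icc (0 : ℝ) 1 := hsupp ht
      exact ⟨by linarith [this.2], by linarith [this.1]⟩
  have hψpos : ∀ t ∈ Ioo 0 1, 0 < ψ t := fun t ht =>
    hfpos _ ⟨by linarith [ht.2], by linarith [ht.1]⟩
  have hψzeros : {t ∈ Icc (0 : ℝ) 1 | iteratedDeriv k ψ t = 0}.Finite :=
    (hzeros.image (1 - ·)).subset fun t ht => ⟨1 - t, ⟨⟨by linarith [ht.1.2], by linarith [ht.1.1]⟩,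
      by simpa [hderiv] using ht.2⟩, sub_sub_cancel 1 t⟩
  have hrefl : Tendsto (fun t : ℝ => 1 - t) (𝓝[Icc 0 1] 1) (𝓝[Icc 0 1] 0) := by
    refine tendsto_nhdsWithin_of_tendsto_nhds_of_eventually_within _
      (((continuous_sub_left (1 : ℝ)).tendsto' 1 0 (sub_self 1)).mono_left nhdsWithin_le_nhds) ?_
    filter_upwards [self_mem_nhdsWithin] with t ht
    exact ⟨by linarith [ht.2], by linarith [ht.1]⟩
  have := (isBigO_iteratedDeriv_rpow_nhdsWithin_Icc_zero hψ hψsupp hψpos hψzeros hn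
    he).comp_tendsto hrefl
  refine isBigO_norm_left.1 ((isBigO_norm_left.2 this).congr (fun t => ?_) fun t => ?_)
  · simp [hderiv]
  · simp [ψ]

theorem isBigO_iteratedDeriv_rpow_Icc {e : ℝ} (hf : ContDiff ℝ k f)
    (hsupp : tsupport f ⊆ Icc 0 1) (hfpos : ∀ t ∈ Ioo 0 1, 0 < f t)
    (hzeros : {t ∈ Icc (0 : ℝ) 1 | iteratedDeriv k f t = 0}.Finite) (hn : n < k)
    (he : e ≤ (k - n : ℝ) / k) :
    iteratedDeriv n f =O[𝓟 (Icc 0 1)] fun t => |f t| ^ e := by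
  refine IsCompact.isBigO_principal_of_forall_nhdsWithin isCompact_Icc fun x hx => ?_
  rcases hx.1.eq_or_lt with rfl | hx0
  · exact isBigO_iteratedDeriv_rpow_nhdsWithin_Icc_zero hf hsupp hfpos hzeros hn he
  rcases hx.2.eq_or_lt with rfl | hx1
  · exact isBigO_iteratedDeriv_rpow_nhdsWithin_Icc_one hf hsupp hfpos hzeros hn he
  · exact (isBigO_rpow_abs_of_ne_zero
      (hf.continuous_iteratedDeriv n (by exact_mod_cast hn.le)).continuousAt
      hf.continuous.continuousAt (hfpos x ⟨hx0, hx1⟩).ne').mono nhdsWithin_le_nhds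

end Boundary

theorem one_div_le_sub_div_of_mul_div_sub_one_lt {P n k : ℝ} (hP : 1 < P) (hn : 0 ≤ n)
    (h : n * P / (P - 1) < k) : n < k ∧ 1 / P ≤ (k - n) / k := by
  have hP1 : 0 < P - 1 := sub_pos.2 hP
  have hlt := (div_lt_iff₀ hP1).1 h
  have hk : 0 < k := pos_of_mul_pos_left ((mul_nonneg hn (by linarith)).trans_lt hlt) hP1.le
  refine ⟨by nlinarith, ?_⟩
  rw [div_le_div_iff₀ (by linarith) hk]
  linarith

/-- Lemma (boundedness of quotients of derivatives of the kernel `φ`): for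
`1 < p ≤ ∞`, `m ∈ ℕ₀` and `k > mp/(p-1) + 1` (`k > m + 1` when `p = ∞`), a
kernel `φ ∈ C_0^k(ℝ)` with `supp φ ⊆ [0,1]`, `φ > 0` on `(0,1)` and `φ^{(k)}`
having only finitely many zeros in `[0,1]` satisfies
`|φ^{(n)}(t)| ≤ C |φ(t)|^{1/p}` on `[0,1]` for every `0 ≤ n ≤ m`. -/
theorem derivative_quotient_bound
    (p : ℝ≥0∞) (hp : 1 < p) (m k : ℕ)
    (hk : if p = ∞ then ((m : ℝ) + 1 < (k : ℝ))
          else ((m : ℝ) * p.toReal / (p.toReal - 1) + 1 < (k : ℝ)))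
    (φ : ℝ → ℝ) (hφ : ContDiff ℝ k φ) (hsupp : tsupport φ ⊆ Set.Icc 0 1)
    (hpos : ∀ t ∈ Set.Ioo (0:ℝ) 1, 0 < φ t)
    (hzeros : {t ∈ Set.Icc (0:ℝ) 1 | iteratedDeriv k φ t = 0}.Finite) :
    ∀ n : ℕ, n ≤ m → ∃ C : ℝ, 0 < C ∧ ∀ t ∈ Set.Icc (0:ℝ) 1,
      |iteratedDeriv n φ t| ≤ C * |φ t| ^ (1 / p.toReal) := by
  intro n hnm
  have hnm' : (n : ℝ) ≤ m := by exact_mod_cast hnm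
  obtain ⟨hn, he⟩ : (n : ℝ) < k ∧ 1 / p.toReal ≤ (k - n : ℝ) / k := by
    split_ifs at hk with hp_top
    · refine ⟨by linarith, ?_⟩
      rw [hp_top, ENNReal.toReal_top, div_zero]
      exact div_nonneg (by linarith) k.cast_nonneg
    · have hP : 1 < p.toReal := by
        simpa using (ENNReal.toReal_lt_toReal ENNReal.one_ne_top hp_top).2 hp
      refine one_div_le_sub_div_of_mul_div_sub_one_lt hP n.cast_nonneg ?_
      calc (n : ℝ) * p.toReal / (p.toReal - 1) ≤ m * p.toReal / (p.toReal - 1) := by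
            gcongr
        _ < k := by linarith
  obtain ⟨C, hC, hbound⟩ :=
    (isBigO_iteratedDeriv_rpow_Icc hφ hsupp hpos hzeros (by exact_mod_cast hn) he).exists_pos
  refine ⟨C, hC, fun t ht => ?_⟩
  simpa [abs_of_nonneg (rpow_nonneg (abs_nonneg _) _)] using isBigOWith_principal.1 hbound t ht
end

section
/- Let m ∈ ℕ and let η:ℝ→ℂ be a continuous function with supp(η) ⊆ (−1,1). Define Ψ_0(t) = ∑_{u=1}^{m} (−1)^{m−u} binom(m,u) u^{−1} η(t/u), Ψ(t) = Ψ_0(t) − (1/2)Ψ_0(t/2) and, for k ∈ ℕ, Ψ_k(t) = 2^k Ψ(2^k t). Then for every bounded measurable function g:ℝ→ℂ, every k ∈ ℕ and every t ∈ ℝ one has (Ψ_k ∗ g)(t) = ∫_{−1}^{1} η(−h)[Δ_{2^{−k}h}^m(g,t) − Δ_{2^{−k+1}h}^m(g,t)] dh. -/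
open MeasureTheory Real Function
open scoped ENNReal NNReal BigOperators

noncomputable section

/-- univariate m-th forward difference -/
def udiff (m : ℕ) (h : ℝ) (g : ℝ → ℂ) (t : ℝ) : ℂ :=
  ∑ j ∈ Finset.range (m + 1), ((-1 : ℂ)) ^ (m - j) * (m.choose j : ℂ) * g (t + j * h)

/-- `Ψ_0(t) = ∑_{u=1}^m (-1)^{m-u} binom(m,u) u^{-1} η(t/u)` -/
def psiZero (m : ℕ) (η : ℝ → ℂ) (t : ℝ) : ℂ :=
  ∑ u ∈ Finset.Icc 1 m, ((-1 : ℂ)) ^ (m - u) * (m.choose u : ℂ) * (u : ℂ)⁻¹ * η (t / u)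

/-- `Ψ(t) = Ψ_0(t) - (1/2) Ψ_0(t/2)` -/
def psiBig (m : ℕ) (η : ℝ → ℂ) (t : ℝ) : ℂ :=
  psiZero m η t - (1 / 2 : ℂ) * psiZero m η (t / 2)

/-- `Ψ_k(t) = 2^k Ψ(2^k t)` -/
def psiK (m : ℕ) (η : ℝ → ℂ) (k : ℕ) (t : ℝ) : ℂ :=
  (2 : ℂ) ^ k * psiBig m η ((2 : ℝ) ^ k * t)

/-! Put `D(s) = ∫ η(-h) g(t + s h) dh` (`dilationIntegral η g t s`). Integration against
`η(-h)` commutes with the finite difference in `h`, so `∫ η(-h) Δ^m_{bh}(g,t) dh = Δ^m_b(D, 0)`.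
On the kernel side, the substitution `h = -(u/s) x` turns `∫ s u⁻¹ η(s h/u) g(t - h) dh` into
`D(u/s)`, so `(s Ψ_0(s ·) ∗ g)(t) = ∑_{u=1}^m (-1)^(m-u) binom(m,u) D(u/s)`: this is
`Δ^m_{1/s}(D, 0)` without its `u = 0` term `(-1)^m D(0)`, a term that cancels in the difference
of the two scales `s = 2^k` and `s/2` making up `Ψ_k`. -/

theorem integrable_comp_mul_mul_of_bounded {f g : ℝ → ℂ} {C : ℝ} (hf : Integrable f)
    (hg : Measurable g) (hC : ∀ x, ‖g x‖ ≤ C) {c : ℝ} (hc : c ≠ 0) {p : ℝ → ℝ}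
    (hp : Measurable p) : Integrable fun x => f (c * x) * g (p x) :=
  (hf.comp_mul_left' hc).mul_bdd (hg.comp hp).aestronglyMeasurable
    (ae_of_all _ fun x => hC (p x))

theorem udiff_eq_sum_Icc_add (m : ℕ) (b : ℝ) (F : ℝ → ℂ) (x : ℝ) :
    udiff m b F x =
      ∑ u ∈ Finset.Icc 1 m, (-1 : ℂ) ^ (m - u) * (m.choose u : ℂ) * F (x + u * b) +
        (-1) ^ m * F x := by
  rw [udiff, Finset.range_eq_Ico, Finset.sum_eq_sum_Ico_succ_bot m.add_one_pos,
    Finset.Ico_add_one_right_eq_Icc, add_comm]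
  simp

section DilationIntegral

variable {η g : ℝ → ℂ} {C : ℝ}

def dilationIntegral (η g : ℝ → ℂ) (t s : ℝ) : ℂ :=
  ∫ h, η (-h) * g (t + s * h)

theorem integrable_neg_mul_comp (hη : Integrable η) (hg : Measurable g) (hC : ∀ x, ‖g x‖ ≤ C)
    (t s : ℝ) : Integrable fun h => η (-h) * g (t + s * h) := by
  simpa only [neg_one_mul] using integrable_comp_mul_mul_of_bounded hη hg hC
    (neg_ne_zero.2 one_ne_zero) (p := fun h => t + s * h) (by fun_prop)

theorem neg_mul_udiff_eq_sum (η g : ℝ → ℂ) (m : ℕ) (b t h : ℝ) :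
    η (-h) * udiff m (b * h) g t =
      ∑ j ∈ Finset.range (m + 1),
        (-1 : ℂ) ^ (m - j) * (m.choose j : ℂ) * (η (-h) * g (t + j * b * h)) := by
  simp only [udiff, Finset.mul_sum, mul_assoc]
  exact Finset.sum_congr rfl fun j _ => by ring_nf

theorem integrable_neg_mul_udiff (hη : Integrable η) (hg : Measurable g) (hC : ∀ x, ‖g x‖ ≤ C)
    (m : ℕ) (b t : ℝ) : Integrable fun h => η (-h) * udiff m (b * h) g t := by
  simp only [neg_mul_udiff_eq_sum]
  exact integrable_finsetSum _ fun j _ => (integrable_neg_mul_comp hη hg hC t _).const_mul _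

theorem integral_neg_mul_udiff (hη : Integrable η) (hg : Measurable g) (hC : ∀ x, ‖g x‖ ≤ C)
    (m : ℕ) (b t : ℝ) :
    ∫ h, η (-h) * udiff m (b * h) g t = udiff m b (dilationIntegral η g t) 0 := by
  simp only [neg_mul_udiff_eq_sum]
  rw [integral_finsetSum _ fun j _ => (integrable_neg_mul_comp hη hg hC t _).const_mul _]
  simp only [integral_const_mul, udiff, dilationIntegral, zero_add]

theorem integral_comp_inv_mul_mul_comp_sub (η g : ℝ → ℂ) (t : ℝ) {b : ℝ} (hb : 0 < b) :
    ∫ h, η (b⁻¹ * h) * g (t - h) = b * dilationIntegral η g t b := by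
  have h := Measure.integral_comp_mul_left (fun h => η (b⁻¹ * h) * g (t - h)) (-b)
  have hx : ∀ x, b⁻¹ * -(b * x) = -x := fun x => by field_simp
  simp only [inv_neg, abs_neg, abs_inv, abs_of_pos hb, neg_mul, hx, sub_neg_eq_add] at h
  rw [dilationIntegral, h, Complex.real_smul, ← mul_assoc, Complex.ofReal_inv,
    mul_inv_cancel₀ (by exact_mod_cast hb.ne'), one_mul]

end DilationIntegral

section Kernel

variable {η g : ℝ → ℂ} {C : ℝ}

theorem integrable_psiZero (hη : Integrable η) (m : ℕ) : Integrable (psiZero m η) := by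
  refine integrable_finsetSum _ fun u hu => (Integrable.comp_div hη ?_).const_mul _
  exact Nat.cast_ne_zero.2 (Nat.one_le_iff_ne_zero.1 (Finset.mem_Icc.1 hu).1)

theorem integrable_ofReal_mul_psiZero_mul (hη : Integrable η) (hg : Measurable g)
    (hC : ∀ x, ‖g x‖ ≤ C) (m : ℕ) {s : ℝ} (hs : s ≠ 0) (t : ℝ) :
    Integrable fun h => (s : ℂ) * psiZero m η (s * h) * g (t - h) := by
  simpa only [mul_assoc] using ((integrable_comp_mul_mul_of_bounded (integrable_psiZero hη m)
    hg hC hs (p := fun h => t - h) (by fun_prop)).const_mul (s : ℂ))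

theorem integral_ofReal_mul_psiZero_mul (hη : Integrable η) (hg : Measurable g)
    (hC : ∀ x, ‖g x‖ ≤ C) (m : ℕ) {s : ℝ} (hs : 0 < s) (t : ℝ) :
    ∫ h, (s : ℂ) * psiZero m η (s * h) * g (t - h) =
      ∑ u ∈ Finset.Icc 1 m,
        (-1 : ℂ) ^ (m - u) * (m.choose u : ℂ) * dilationIntegral η g t (u * s⁻¹) := by
  have hterm : ∀ (u : ℕ) (h : ℝ),
      (s : ℂ) * ((-1) ^ (m - u) * (m.choose u : ℂ) * (u : ℂ)⁻¹ * η (s * h / u)) * g (t - h) =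
        (-1) ^ (m - u) * (m.choose u : ℂ) * ((s : ℂ) * (u : ℂ)⁻¹) *
          (η ((u * s⁻¹)⁻¹ * h) * g (t - h)) := fun u h => by
    have harg : s * h / u = (u * s⁻¹)⁻¹ * h := by rw [mul_inv, inv_inv]; ring
    rw [harg]; ring
  have hscale : ∀ u ∈ Finset.Icc 1 m, 0 < (u : ℝ) * s⁻¹ := fun u hu => by
    have : (1 : ℝ) ≤ u := by exact_mod_cast (Finset.mem_Icc.1 hu).1
    positivity
  simp only [psiZero, Finset.mul_sum, Finset.sum_mul, hterm]
  rw [integral_finsetSum _ fun u hu => (integrable_comp_mul_mul_of_bounded hη hg hC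
    (inv_ne_zero (hscale u hu).ne') (p := fun h => t - h) (by fun_prop)).const_mul _]
  refine Finset.sum_congr rfl fun u hu => ?_
  rw [integral_const_mul, integral_comp_inv_mul_mul_comp_sub η g t (hscale u hu)]
  have hu' : (u : ℂ) ≠ 0 := by
    exact_mod_cast Nat.one_le_iff_ne_zero.1 (Finset.mem_Icc.1 hu).1
  have hs' : (s : ℂ) ≠ 0 := by exact_mod_cast hs.ne'
  push_cast
  field_simp

theorem ofReal_mul_psiBig (m : ℕ) (η : ℝ → ℂ) (s h : ℝ) :
    (s : ℂ) * psiBig m η (s * h) =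
      (s : ℂ) * psiZero m η (s * h) - ((s / 2 : ℝ) : ℂ) * psiZero m η (s / 2 * h) := by
  rw [psiBig, div_mul_eq_mul_div]
  push_cast
  ring_nf

theorem integral_ofReal_mul_psiBig_mul (hη : Integrable η) (hg : Measurable g)
    (hC : ∀ x, ‖g x‖ ≤ C) (m : ℕ) {s : ℝ} (hs : 0 < s) (t : ℝ) :
    ∫ h, (s : ℂ) * psiBig m η (s * h) * g (t - h) =
      ∑ u ∈ Finset.Icc 1 m,
          (-1 : ℂ) ^ (m - u) * (m.choose u : ℂ) * dilationIntegral η g t (u * s⁻¹) -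
        ∑ u ∈ Finset.Icc 1 m,
          (-1 : ℂ) ^ (m - u) * (m.choose u : ℂ) * dilationIntegral η g t (u * (s / 2)⁻¹) := by
  have hs2 : 0 < s / 2 := half_pos hs
  simp only [ofReal_mul_psiBig, sub_mul]
  rw [integral_sub (integrable_ofReal_mul_psiZero_mul hη hg hC m hs.ne' t)
    (integrable_ofReal_mul_psiZero_mul hη hg hC m hs2.ne' t),
    integral_ofReal_mul_psiZero_mul hη hg hC m hs, integral_ofReal_mul_psiZero_mul hη hg hC m hs2]

end Kernel

theorem intervalIntegral_comp_neg_mul_eq_integral {η : ℝ → ℂ} {a b : ℝ}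
    (hη : Function.support η ⊆ Set.Ico (-b) (-a)) (F : ℝ → ℂ) :
    ∫ h in a..b, η (-h) * F h = ∫ h, η (-h) * F h := by
  refine intervalIntegral.integral_eq_integral_of_support_subset fun h hh => ?_
  have := hη (left_ne_zero_of_mul hh)
  constructor <;> linarith [this.1, this.2]

theorem convolution_difference_representation_dyadic_general
    (m : ℕ) (η : ℝ → ℂ) (hc : Continuous η)
    (hs : tsupport η ⊆ Set.Ioo (-1 : ℝ) 1) :
    ∀ g : ℝ → ℂ, Measurable g → (∃ Cg : ℝ, ∀ x, ‖g x‖ ≤ Cg) →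
      ∀ k : ℕ, 1 ≤ k → ∀ t : ℝ,
      (∫ h : ℝ, psiK m η k h * g (t - h)) =
        ∫ h in (-1 : ℝ)..1, η (-h) *
          (udiff m ((2 : ℝ) ^ (-(k : ℝ)) * h) g t -
            udiff m ((2 : ℝ) ^ (-(k : ℝ) + 1) * h) g t) := by
  rintro g hg ⟨C, hC⟩ k - t
  have hη : Integrable η := hc.integrable_of_hasCompactSupport
    (isCompact_Icc.of_isClosed_subset (isClosed_tsupport η) (hs.trans Set.Ioo_subset_Icc_self))
  have hsupp : Function.support η ⊆ Set.Ico (-1) (-(-1)) := by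
    rw [neg_neg]; exact (subset_tsupport η).trans (hs.trans Set.Ioo_subset_Ico_self)
  set s : ℝ := 2 ^ k
  have hs0 : 0 < s := by positivity
  have hscale : (2 : ℝ) ^ (-(k : ℝ)) = s⁻¹ := by
    rw [Real.rpow_neg zero_le_two, Real.rpow_natCast]
  have hscale' : (2 : ℝ) ^ (-(k : ℝ) + 1) = (s / 2)⁻¹ := by
    rw [Real.rpow_add two_pos, hscale, Real.rpow_one, inv_div, div_eq_inv_mul]
  have hpsiK : ∀ h, psiK m η k h = (s : ℂ) * psiBig m η (s * h) := fun h => by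
    simp [psiK, s]
  rw [intervalIntegral_comp_neg_mul_eq_integral hsupp, hscale, hscale']
  simp only [hpsiK, mul_sub]
  rw [integral_ofReal_mul_psiBig_mul hη hg hC m hs0, integral_sub
    (integrable_neg_mul_udiff hη hg hC m _ t) (integrable_neg_mul_udiff hη hg hC m _ t),
    integral_neg_mul_udiff hη hg hC, integral_neg_mul_udiff hη hg hC,
    udiff_eq_sum_Icc_add, udiff_eq_sum_Icc_add]
  simp only [zero_add]
  abel

/-- Lemma (convolution representation via differences, dyadic level `k ≥ 1`):
if `η` is continuous with `supp η ⊆ (-1,1)`, then for every bounded measurable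
`g`, every `k ≥ 1` and all `t`,
`(Ψ_k ∗ g)(t) = ∫_{-1}^1 η(-h) [Δ_{2^{-k}h}^m(g,t) - Δ_{2^{-k+1}h}^m(g,t)] dh`. -/
theorem convolution_difference_representation_dyadic
    (m : ℕ) (hm : 0 < m) (η : ℝ → ℂ) (hc : Continuous η)
    (hs : tsupport η ⊆ Set.Ioo (-1 : ℝ) 1) :
    ∀ g : ℝ → ℂ, Measurable g → (∃ Cg : ℝ, ∀ x, ‖g x‖ ≤ Cg) →
      ∀ k : ℕ, 1 ≤ k → ∀ t : ℝ,
      (∫ h : ℝ, psiK m η k h * g (t - h)) =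
        ∫ h in (-1 : ℝ)..1, η (-h) *
          (udiff m ((2 : ℝ) ^ (-(k : ℝ)) * h) g t -
            udiff m ((2 : ℝ) ^ (-(k : ℝ) + 1) * h) g t) :=
  convolution_difference_representation_dyadic_general m η hc hs

end
end

section
/- Let m ∈ ℕ. Then there exists a constant C_m > 0 such that for every m-times continuously differentiable function f:ℝ→ℂ whose m-th derivative f^{(m)} is locally integrable, every h ∈ ℝ∖{0} and every t ∈ ℝ one has |Δ_h^m(f,t)| ≤ C_m |h|^m · (M f^{(m)})(t), where M denotes the Hardy–Littlewood maximal function. -/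
/-!
Since `Δ_h^{n+1} f = Δ_h^n (Δ_h f)`, `(Δ_h f)^{(n)} = Δ_h (f^{(n)})` and
`|Δ_h g(y)| ≤ ∫_{[y, y+h]} |g'|`, induction on `n` gives
`|Δ_h^{n+1} f(t)| ≤ n! |h|^n ∫_{I_{n+1}} |f^{(n+1)}|`, where `I_k` is the interval between `t`
and `t + k h`: in the inductive step the pointwise bound
`|Δ_h f^{(n+1)}(y)| ≤ ∫_{I_{n+2}} |f^{(n+2)}|` for `y ∈ I_{n+1}` is integrated over `I_{n+1}`,
which has length `(n+1)|h|`. Hence `|Δ_h^{n+1} f(t)|` is at most `(n+1)! |h|^{n+1}` times the mean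
of `|f^{(n+1)}|` over `I_{n+1} ∋ t`, and that mean is bounded by the maximal function at `t`.
-/

open MeasureTheory Real Function
open scoped ENNReal NNReal BigOperators

noncomputable section

/-- Hardy-Littlewood maximal function over bounded intervals containing `t` -/
def hlMax1 (g : ℝ → ℂ) (t : ℝ) : ℝ≥0∞ :=
  ⨆ (a : ℝ) (b : ℝ) (_ : a < b) (_ : t ∈ Set.Icc a b),
    (ENNReal.ofReal (b - a))⁻¹ * ∫⁻ y in Set.Icc a b, ENNReal.ofReal (‖g y‖)

open Set
open scoped Nat

lemma udiff_eq_fwdDiff_iterate (m : ℕ) (h : ℝ) (f : ℝ → ℂ) (t : ℝ) :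
    udiff m h f t = (fwdDiff h)^[m] f t := by
  rw [fwdDiff_iter_eq_sum_shift, udiff]
  refine Finset.sum_congr rfl fun j _ => ?_
  simp only [zsmul_eq_mul, nsmul_eq_mul]
  push_cast
  ring

section FwdDiff

variable {𝕜 F : Type*} [NontriviallyNormedField 𝕜] [NormedAddCommGroup F] [NormedSpace 𝕜 F]
  {n : ℕ} {f : 𝕜 → F}

lemma ContDiff.fwdDiff (hf : ContDiff 𝕜 n f) (h : 𝕜) : ContDiff 𝕜 n (fwdDiff h f) :=
  (hf.comp (contDiff_id.add contDiff_const)).sub hf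

lemma iteratedDeriv_fwdDiff (hf : ContDiff 𝕜 n f) (h : 𝕜) :
    iteratedDeriv n (fwdDiff h f) = fwdDiff h (iteratedDeriv n f) := by
  ext x
  have hshift : ContDiff 𝕜 n fun y => f (y + h) := hf.comp (contDiff_id.add contDiff_const)
  change iteratedDeriv n (fun y => f (y + h) - f y) x = _
  rw [iteratedDeriv_fun_sub hshift.contDiffAt hf.contDiffAt, iteratedDeriv_comp_add_const]
  rfl

end FwdDiff

lemma enorm_sub_le_lintegral_deriv_uIcc {E : Type*} [NormedAddCommGroup E] [NormedSpace ℝ E]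
    {f : ℝ → E} (hf : ContDiff ℝ 1 f) (a b : ℝ) :
    ‖f b - f a‖ₑ ≤ ∫⁻ x in uIcc a b, ‖deriv f x‖ₑ := by
  rcases le_total a b with hab | hba
  · rw [uIcc_of_le hab]
    exact enorm_sub_le_lintegral_deriv_of_contDiffOn_Icc hf.contDiffOn hab
  · rw [uIcc_of_ge hba, enorm_sub_rev]
    exact enorm_sub_le_lintegral_deriv_of_contDiffOn_Icc hf.contDiffOn hba

lemma volume_uIcc_add_natCast_mul (t h : ℝ) (k : ℕ) :
    volume (uIcc t (t + k * h)) = k * ‖h‖ₑ := by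
  rw [Real.volume_interval, add_sub_cancel_left, abs_mul, Nat.abs_cast,
    ENNReal.ofReal_mul (Nat.cast_nonneg k), ENNReal.ofReal_natCast, Real.enorm_eq_ofReal_abs]

lemma uIcc_add_subset_uIcc_add_mul {t h y c : ℝ} (hc : 0 ≤ c) (hy : y ∈ uIcc t (t + c * h)) :
    uIcc y (y + h) ⊆ uIcc t (t + (c + 1) * h) := by
  rw [mem_uIcc] at hy
  apply uIcc_subset_uIcc <;> rw [mem_uIcc] <;> rcases le_total 0 h with hh | hh <;>
    rcases hy with hy | hy
  all_goals first
    | exact Or.inl ⟨by nlinarith, by nlinarith⟩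
    | exact Or.inr ⟨by nlinarith, by nlinarith⟩

theorem enorm_fwdDiff_iterate_le {E : Type*} [NormedAddCommGroup E] [NormedSpace ℝ E] (n : ℕ)
    {f : ℝ → E} (hf : ContDiff ℝ (n + 1 : ℕ) f) (h t : ℝ) :
    ‖(fwdDiff h)^[n + 1] f t‖ₑ ≤ n ! * ‖h‖ₑ ^ n *
      ∫⁻ y in uIcc t (t + (n + 1 : ℕ) * h), ‖iteratedDeriv (n + 1) f y‖ₑ := by
  induction n generalizing f with
  | zero => simpa [fwdDiff] using enorm_sub_le_lintegral_deriv_uIcc hf t (t + h)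
  | succ n ih =>
    set g := iteratedDeriv (n + 1) f
    set I := uIcc t (t + (n + 1 : ℕ) * h)
    set J := ∫⁻ x in uIcc t (t + (n + 1 + 1 : ℕ) * h), ‖iteratedDeriv (n + 1 + 1) f x‖ₑ
    have hf' : ContDiff ℝ (n + 1 : ℕ) f := hf.of_le (by norm_cast; omega)
    have hΔg : ∀ y ∈ I, ‖fwdDiff h g y‖ₑ ≤ J := fun y hy => by
      have hg : ContDiff ℝ 1 g := (contDiff_nat_succ_iff_contDiff_one_iteratedDeriv.mp hf).2
      refine (enorm_sub_le_lintegral_deriv_uIcc hg y (y + h)).trans ?_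
      rw [← iteratedDeriv_succ]
      refine lintegral_mono_set (uIcc_add_subset_uIcc_add_mul (by positivity) hy |>.trans_eq ?_)
      push_cast; rfl
    calc ‖(fwdDiff h)^[n + 1] (fwdDiff h f) t‖ₑ
        ≤ n ! * ‖h‖ₑ ^ n * ∫⁻ y in I, ‖fwdDiff h g y‖ₑ := by
          rw [← iteratedDeriv_fwdDiff hf']
          exact ih (hf'.fwdDiff h)
      _ ≤ n ! * ‖h‖ₑ ^ n * (J * volume I) := by
          gcongr
          exact (setLIntegral_mono measurable_const hΔg).trans_eq (setLIntegral_const _ _)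
      _ = (n + 1)! * ‖h‖ₑ ^ (n + 1) * J := by
          rw [volume_uIcc_add_natCast_mul, Nat.factorial_succ]
          push_cast
          ring

lemma setLAverage_uIcc_le_hlMax1 (g : ℝ → ℂ) {a b : ℝ} (hab : a ≠ b) :
    ⨍⁻ y in uIcc a b, ‖g y‖ₑ ∂volume ≤ hlMax1 g a := by
  rw [setLAverage_eq, Real.volume_interval, ENNReal.div_eq_inv_mul, abs_sub_comm,
    ← max_sub_min_eq_abs']
  simp_rw [← ofReal_norm]
  exact le_iSup₂_of_le (a ⊓ b) (a ⊔ b) <|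
    le_iSup₂_of_le (inf_lt_sup.mpr hab) ⟨inf_le_left, le_sup_left⟩ le_rfl

theorem enorm_fwdDiff_iterate_le_laverage {E : Type*} [NormedAddCommGroup E] [NormedSpace ℝ E]
    (n : ℕ) {f : ℝ → E} (hf : ContDiff ℝ (n + 1 : ℕ) f) (h t : ℝ) :
    ‖(fwdDiff h)^[n + 1] f t‖ₑ ≤ (n + 1)! * ‖h‖ₑ ^ (n + 1) *
      ⨍⁻ y in uIcc t (t + (n + 1 : ℕ) * h), ‖iteratedDeriv (n + 1) f y‖ₑ ∂volume := by
  have hfin : volume (uIcc t (t + (n + 1 : ℕ) * h)) ≠ ⊤ := isCompact_uIcc.measure_ne_top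
  refine (enorm_fwdDiff_iterate_le n hf h t).trans_eq ?_
  rw [← measure_mul_setLAverage _ hfin, volume_uIcc_add_natCast_mul, Nat.factorial_succ]
  push_cast
  ring

/-- Lemma (maximal function bound for `m`-th differences): there is `C_m > 0`
such that `|Δ_h^m(f,t)| ≤ C_m |h|^m (M f^{(m)})(t)` for every `m`-times
continuously differentiable `f` with locally integrable `f^{(m)}`, every
`h ≠ 0` and every `t`. -/
theorem difference_maximal_bound (m : ℕ) (hm : 0 < m) :
    ∃ C : ℝ, 0 < C ∧ ∀ f : ℝ → ℂ, ContDiff ℝ m f →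
      LocallyIntegrable (iteratedDeriv m f) volume →
      ∀ h : ℝ, h ≠ 0 → ∀ t : ℝ,
      ENNReal.ofReal (‖udiff m h f t‖) ≤
        ENNReal.ofReal (C * |h| ^ m) * hlMax1 (iteratedDeriv m f) t := by
  obtain ⟨n, rfl⟩ : ∃ n, m = n + 1 := ⟨m - 1, by omega⟩
  refine ⟨(n + 1)!, by positivity, fun f hf _ h hh t => ?_⟩
  have hne : t ≠ t + (n + 1 : ℕ) * h := by
    simpa [eq_comm (a := t)] using And.intro n.cast_add_one_ne_zero hh
  rw [ofReal_norm, udiff_eq_fwdDiff_iterate, ENNReal.ofReal_mul (by positivity),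
    ENNReal.ofReal_pow (abs_nonneg h), ← Real.enorm_eq_ofReal_abs, ENNReal.ofReal_natCast]
  calc ‖(fwdDiff h)^[n + 1] f t‖ₑ
      ≤ (n + 1)! * ‖h‖ₑ ^ (n + 1) *
        ⨍⁻ y in uIcc t (t + (n + 1 : ℕ) * h), ‖iteratedDeriv (n + 1) f y‖ₑ ∂volume :=
        enorm_fwdDiff_iterate_le_laverage n hf h t
    _ ≤ _ := by gcongr; exact setLAverage_uIcc_le_hlMax1 _ hne

end
end
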